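/- Let λ > 0, a₁ ≥ 0, t₀ > 0, let g : ℝ → ℝ be a nonnegative continuous function, and let y : ℝ → ℝ be a nonnegative function, differentiable on [t₀, ∞), satisfying y'(t) + λ·y(t) ≤ g(t) for all t ≥ t₀ and ∫_{t}^{t+1} g(s) ds ≤ a₁ for all t ≥ t₀. Then for all t ≥ t₀, y(t) ≤ e^{−λ(t − t₀)}·y(t₀) + a₁·e^{2λ}/(e^{λ} − 1). -/

import Mathlib

/-!
Multiplying by the integrating factor `e^{λu}` turns `y' + λ y ≤ g` into
`y t ≤ e^{-λ(t-s)} y s + ∫ₛᵗ g ≤ e^{-λ(t-s)} y s + a₁` for `t ∈ [s, s + 1]`.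
Chaining these unit steps back to `t₀`, the contributions `a₁` are damped by successive factors
`e^{-λ}`, so they sum to a geometric series; any `C ≥ 0` with `e^{-λ} C + a₁ ≤ C` bounds it.
-/

open Set Real

section IntegratingFactor

variable {lam s : ℝ} {g y y' : ℝ → ℝ}

theorem antitoneOn_exp_mul_sub_integral (hg : Continuous g)
    (hy : ∀ u ∈ Ici s, HasDerivWithinAt y (y' u) (Ici s) u)
    (hineq : ∀ u ∈ Ici s, y' u + lam * y u ≤ g u) :
    AntitoneOn (fun u => exp (lam * u) * y u - ∫ v in s..u, exp (lam * v) * g v) (Ici s) := by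
  have hexp : ∀ u, HasDerivAt (fun u => exp (lam * u)) (exp (lam * u) * lam) u := fun u => by
    simpa using ((hasDerivAt_id u).const_mul lam).exp
  have hcont : Continuous fun v => exp (lam * v) * g v := by fun_prop
  have hint : ∀ u, HasDerivAt (fun u => ∫ v in s..u, exp (lam * v) * g v)
      (exp (lam * u) * g u) u := fun u =>
    intervalIntegral.integral_hasDerivAt_right (hcont.intervalIntegrable s u)
      (hcont.stronglyMeasurableAtFilter _ _) hcont.continuousAt
  have hderiv : ∀ u ∈ Ici s, HasDerivWithinAt
      (fun u => exp (lam * u) * y u - ∫ v in s..u, exp (lam * v) * g v)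
      (exp (lam * u) * (y' u + lam * y u - g u)) (Ici s) u := fun u hu =>
    (((hexp u).hasDerivWithinAt.mul (hy u hu)).sub (hint u).hasDerivWithinAt).congr_deriv
      (by ring)
  refine antitoneOn_of_hasDerivWithinAt_nonpos (convex_Ici s)
    (f' := fun u => exp (lam * u) * (y' u + lam * y u - g u))
    (fun u hu => (hderiv u hu).continuousWithinAt) (fun u hu => ?_) (fun u hu => ?_)
  · rw [interior_Ici] at hu ⊢
    exact (hderiv u (mem_Ici_of_Ioi hu)).mono Ioi_subset_Ici_self
  · rw [interior_Ici] at hu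
    exact mul_nonpos_of_nonneg_of_nonpos (exp_pos _).le (by linarith [hineq u (mem_Ici_of_Ioi hu)])

theorem le_exp_mul_add_integral (hlam : 0 ≤ lam) (hg : Continuous g) (hg0 : ∀ u, 0 ≤ g u)
    (hy : ∀ u ∈ Ici s, HasDerivWithinAt y (y' u) (Ici s) u)
    (hineq : ∀ u ∈ Ici s, y' u + lam * y u ≤ g u) {t : ℝ} (hst : s ≤ t) :
    y t ≤ exp (-lam * (t - s)) * y s + ∫ v in s..t, g v := by
  have hanti := antitoneOn_exp_mul_sub_integral hg hy hineq (mem_Ici.2 le_rfl) hst hst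
  simp only [intervalIntegral.integral_same, sub_zero] at hanti
  have hweight : (∫ v in s..t, exp (lam * v) * g v) ≤ exp (lam * t) * ∫ v in s..t, g v := by
    rw [← intervalIntegral.integral_const_mul]
    refine intervalIntegral.integral_mono_on hst
      (Continuous.intervalIntegrable (by fun_prop) _ _)
      (Continuous.intervalIntegrable (by fun_prop) _ _) fun v hv => ?_
    gcongr
    · exact hg0 v
    · exact hv.2
  have hfactor : exp (lam * t) * exp (-lam * (t - s)) = exp (lam * s) := by
    rw [← exp_add]; ring_nf
  refine le_of_mul_le_mul_left ?_ (exp_pos (lam * t))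
  rw [mul_add, ← mul_assoc, hfactor]
  linarith

end IntegratingFactor

theorem le_exp_mul_add_of_unit_steps {lam a C t₀ : ℝ} {y : ℝ → ℝ} (hC0 : 0 ≤ C)
    (hC : exp (-lam) * C + a ≤ C)
    (hstep : ∀ s ≥ t₀, ∀ t ∈ Icc s (s + 1), y t ≤ exp (-lam * (t - s)) * y s + a) :
    ∀ t ≥ t₀, y t ≤ exp (-lam * (t - t₀)) * y t₀ + C := by
  have ha : a ≤ C := by nlinarith [exp_pos (-lam)]
  have hnear : ∀ t ∈ Icc t₀ (t₀ + 1), y t ≤ exp (-lam * (t - t₀)) * y t₀ + C := fun t ht => by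
    linarith [hstep t₀ le_rfl t ht]
  have hiter : ∀ n : ℕ, ∀ t ∈ Icc t₀ (t₀ + n),
      y t ≤ exp (-lam * (t - t₀)) * y t₀ + C := by
    intro n
    induction n with
    | zero => exact fun t ht => hnear t ⟨ht.1, by norm_num at ht; linarith⟩
    | succ n ih =>
      rintro t ⟨ht₀, htn⟩
      push_cast at htn
      rcases le_or_gt t (t₀ + 1) with hle | hgt
      · exact hnear t ⟨ht₀, hle⟩
      calc y t ≤ exp (-lam * (t - (t - 1))) * y (t - 1) + a :=
            hstep (t - 1) (by linarith) t ⟨by linarith, by linarith⟩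
        _ ≤ exp (-lam) * (exp (-lam * (t - 1 - t₀)) * y t₀ + C) + a := by
            rw [sub_sub_cancel, mul_one]
            gcongr
            exact ih (t - 1) ⟨by linarith, by linarith⟩
        _ = exp (-lam * (t - t₀)) * y t₀ + (exp (-lam) * C + a) := by
            rw [mul_add, ← mul_assoc, ← exp_add]; ring_nf
        _ ≤ exp (-lam * (t - t₀)) * y t₀ + C := by gcongr
  exact fun t ht => hiter ⌈t - t₀⌉₊ t ⟨ht, by linarith [Nat.le_ceil (t - t₀)]⟩

theorem exp_neg_mul_add_le_mul_exp_two_mul_div_exp_sub_one {lam a : ℝ} (hlam : 0 < lam)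
    (ha : 0 ≤ a) :
    exp (-lam) * (a * exp (2 * lam) / (exp lam - 1)) + a ≤ a * exp (2 * lam) / (exp lam - 1) := by
  have hden : 0 < exp lam - 1 := by linarith [add_one_lt_exp hlam.ne']
  have hsq : exp (2 * lam) = exp lam * exp lam := by rw [← exp_add]; ring_nf
  have hgap : a * exp (2 * lam) / (exp lam - 1)
      - exp (-lam) * (a * exp (2 * lam) / (exp lam - 1)) = a * exp lam := by
    rw [exp_neg, hsq]
    field_simp
  nlinarith [add_one_lt_exp hlam.ne']

theorem uniform_gronwall_variant_explicit_general (lam a₁ t₀ : ℝ)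
    (hlam : 0 < lam) (ha₁ : 0 ≤ a₁)
    (g y y' : ℝ → ℝ) (hg : Continuous g)
    (hg0 : ∀ t, 0 ≤ g t)
    (hy : ∀ t ∈ Set.Ici t₀, HasDerivWithinAt y (y' t) (Set.Ici t₀) t)
    (hineq : ∀ t ∈ Set.Ici t₀, y' t + lam * y t ≤ g t)
    (hgint : ∀ t ∈ Set.Ici t₀, (∫ s in t..(t + 1), g s) ≤ a₁) :
    ∀ t ∈ Set.Ici t₀,
      y t ≤ Real.exp (-lam * (t - t₀)) * y t₀
        + a₁ * Real.exp (2 * lam) / (Real.exp lam - 1) := by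
  refine le_exp_mul_add_of_unit_steps
    (div_nonneg (by positivity) (by linarith [add_one_lt_exp hlam.ne']))
    (exp_neg_mul_add_le_mul_exp_two_mul_div_exp_sub_one hlam ha₁) fun s hs t ht => ?_
  have hIci : Ici s ⊆ Ici t₀ := Ici_subset_Ici.2 hs
  calc y t ≤ exp (-lam * (t - s)) * y s + ∫ v in s..t, g v :=
        le_exp_mul_add_integral hlam.le hg hg0 (fun u hu => (hy u (hIci hu)).mono hIci)
          (fun u hu => hineq u (hIci hu)) ht.1
    _ ≤ exp (-lam * (t - s)) * y s + ∫ v in s..(s + 1), g v := by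
        gcongr
        exact intervalIntegral.integral_mono_interval le_rfl ht.1 ht.2
          (Filter.Eventually.of_forall hg0) (hg.intervalIntegrable _ _)
    _ ≤ exp (-lam * (t - s)) * y s + a₁ := by gcongr; exact hgint s hs

/-- Explicit quantitative bound in the variant uniform Gronwall lemma. -/
theorem uniform_gronwall_variant_explicit (lam a₁ t₀ : ℝ)
    (hlam : 0 < lam) (ha₁ : 0 ≤ a₁) (ht₀ : 0 < t₀)
    (g y y' : ℝ → ℝ) (hg : Continuous g)
    (hg0 : ∀ t, 0 ≤ g t) (hy0 : ∀ t, 0 ≤ y t)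
    (hy : ∀ t ∈ Set.Ici t₀, HasDerivWithinAt y (y' t) (Set.Ici t₀) t)
    (hineq : ∀ t ∈ Set.Ici t₀, y' t + lam * y t ≤ g t)
    (hgint : ∀ t ∈ Set.Ici t₀, (∫ s in t..(t + 1), g s) ≤ a₁) :
    ∀ t ∈ Set.Ici t₀,
      y t ≤ Real.exp (-lam * (t - t₀)) * y t₀
        + a₁ * Real.exp (2 * lam) / (Real.exp lam - 1) :=
  uniform_gronwall_variant_explicit_general lam a₁ t₀ hlam ha₁ g y y' hg hg0 hy hineq hgint
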